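/- Hankel transform of the moments with exponential generating function sec²: define m(n) = iteratedDeriv n (fun x => (cos x)⁻¹ ^ 2) 0, i.e., the n-th coefficient of the exponential power series expansion of sec²(x) at 0. Then for every natural number n, the determinant of the (n+1)×(n+1) Hankel matrix with (i,j) entry m(i+j) equals ∏_{k=0}^{n} ((k+1)(k+2))^{n-k}. -/

import Mathlib

/-!
Writing `sec² x · tanᵏ x = secᵏ⁺² x · sinᵏ x`, its derivative is
`k sec² x tanᵏ⁻¹ x + (k + 2) sec² x tanᵏ⁺¹ x`. Hence `m(n) = T(n, 0)` for the triangle `T`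
of weighted Motzkin paths with up steps `k → k + 1` of weight `k + 1` and down steps
`k + 1 → k` of weight `k + 2`. With the weights `w k = k + 1` the tridiagonal production matrix
is `w`-symmetric (`w (k + 1) · (k + 1) = w k · (k + 2)`), which gives
`m(i + j) = ∑ₖ (k + 1) T(i, k) T(j, k)`, i.e. `H = L D Lᵀ` with `L` lower triangular with
diagonal `k!` and `D = diag(k + 1)`. So `det H = (∏ₖ k!)² (n + 1)! = ∏ₖ ((k + 1)(k + 2))ⁿ⁻ᵏ`.
-/

open Finset Matrix

section Motzkin

variable {R : Type*} [CommRing R]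

/-- `motzkinTriangle u s v n k` is the total weight of the paths of length `n` from height `0`
to height `k` whose up steps from height `k`, level steps at height `k` and down steps to
height `k` have weights `u k`, `s k` and `v k`. -/
def motzkinTriangle (u s v : ℕ → R) : ℕ → ℕ → R
  | 0, 0 => 1
  | 0, _ + 1 => 0
  | n + 1, 0 => s 0 * motzkinTriangle u s v n 0 + v 0 * motzkinTriangle u s v n 1
  | n + 1, k + 1 => u k * motzkinTriangle u s v n k + s (k + 1) * motzkinTriangle u s v n (k + 1)
      + v (k + 1) * motzkinTriangle u s v n (k + 2)

namespace motzkinTriangle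

variable (u s v w : ℕ → R)

local notation "T" => motzkinTriangle u s v

theorem succ_zero (n : ℕ) : T (n + 1) 0 = s 0 * T n 0 + v 0 * T n 1 := rfl

theorem succ_succ (n k : ℕ) :
    T (n + 1) (k + 1) = u k * T n k + s (k + 1) * T n (k + 1) + v (k + 1) * T n (k + 2) := rfl

theorem eq_zero_of_lt {n k : ℕ} (h : n < k) : T n k = 0 := by
  induction n generalizing k with
  | zero => obtain ⟨k, rfl⟩ := Nat.exists_eq_add_one_of_ne_zero h.ne'; rfl
  | succ n ih =>
    obtain ⟨k, rfl⟩ := Nat.exists_eq_add_one_of_ne_zero (by omega : k ≠ 0)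
    rw [succ_succ, ih (by omega), ih (by omega), ih (by omega)]
    ring

theorem self (n : ℕ) : T n n = ∏ k ∈ range n, u k := by
  induction n with
  | zero => rfl
  | succ n ih =>
    rw [succ_succ, ih, eq_zero_of_lt _ _ _ (by omega), eq_zero_of_lt _ _ _ (by omega),
      prod_range_succ]
    ring

theorem sum_weight_mul_succ_left (hw : ∀ k, w (k + 1) * u k = w k * v k) (i j : ℕ) :
    ∑ k ∈ range (i + 2), w k * T (i + 1) k * T j k
      = ∑ k ∈ range (i + 1), w k * T i k * T (j + 1) k := by
  have h₁ : T i (i + 1) = 0 := eq_zero_of_lt _ _ _ (by omega)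
  have h₂ : T i (i + 2) = 0 := eq_zero_of_lt _ _ _ (by omega)
  have hup : ∑ k ∈ range (i + 1), w (k + 1) * u k * T i k * T j (k + 1)
      = ∑ k ∈ range i, w (k + 1) * v (k + 1) * T i (k + 1) * T j (k + 2)
        + w 0 * v 0 * T i 0 * T j 1 := by
    simp_rw [hw]; exact sum_range_succ' (fun k => w k * v k * T i k * T j (k + 1)) i
  have hdown : ∑ k ∈ range (i + 1), w (k + 1) * v (k + 1) * T i (k + 2) * T j (k + 1)
      + w 0 * v 0 * T i 1 * T j 0 = ∑ k ∈ range i, w (k + 1) * u k * T i (k + 1) * T j k := by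
    rw [← sum_range_succ' (fun k => w k * v k * T i (k + 1) * T j k), sum_range_succ,
      sum_range_succ, h₁, h₂]
    simp_rw [hw]; ring
  have hlevel : ∑ k ∈ range (i + 1), w (k + 1) * s (k + 1) * T i (k + 1) * T j (k + 1)
      = ∑ k ∈ range i, w (k + 1) * s (k + 1) * T i (k + 1) * T j (k + 1) := by
    rw [sum_range_succ, h₁]; ring
  have hlhs : ∑ k ∈ range (i + 2), w k * T (i + 1) k * T j k
      = ∑ k ∈ range (i + 1), w (k + 1) * u k * T i k * T j (k + 1)
        + ∑ k ∈ range (i + 1), w (k + 1) * s (k + 1) * T i (k + 1) * T j (k + 1)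
        + ∑ k ∈ range (i + 1), w (k + 1) * v (k + 1) * T i (k + 2) * T j (k + 1)
        + w 0 * s 0 * T i 0 * T j 0 + w 0 * v 0 * T i 1 * T j 0 := by
    rw [sum_range_succ', ← sum_add_distrib, ← sum_add_distrib, succ_zero, add_assoc]
    congr 1
    · exact sum_congr rfl fun k _ => by rw [succ_succ]; ring
    · ring
  have hrhs : ∑ k ∈ range (i + 1), w k * T i k * T (j + 1) k
      = ∑ k ∈ range i, w (k + 1) * u k * T i (k + 1) * T j k
        + ∑ k ∈ range i, w (k + 1) * s (k + 1) * T i (k + 1) * T j (k + 1)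
        + ∑ k ∈ range i, w (k + 1) * v (k + 1) * T i (k + 1) * T j (k + 2)
        + w 0 * s 0 * T i 0 * T j 0 + w 0 * v 0 * T i 0 * T j 1 := by
    rw [sum_range_succ', ← sum_add_distrib, ← sum_add_distrib, succ_zero, add_assoc]
    congr 1
    · exact sum_congr rfl fun k _ => by rw [succ_succ]; ring
    · ring
  rw [hlhs, hrhs]
  linear_combination hup + hdown + hlevel

theorem sum_weight_mul (hw : ∀ k, w (k + 1) * u k = w k * v k) (i j : ℕ) :
    ∑ k ∈ range (i + 1), w k * T i k * T j k = w 0 * T (i + j) 0 := by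
  induction i generalizing j with
  | zero => simp [motzkinTriangle]
  | succ i ih => rw [sum_weight_mul_succ_left u s v w hw, ih, Nat.add_right_comm i 1 j, add_assoc]

theorem hankel_eq_mul_diagonal_mul_transpose (hw : ∀ k, w (k + 1) * u k = w k * v k) (n : ℕ) :
    (of fun i j : Fin n => w 0 * T (i + j) 0)
      = of (fun i k : Fin n => T i k) * diagonal (fun k : Fin n => w k)
        * (of fun i k : Fin n => T i k)ᵀ := by
  ext i j
  rw [of_apply, ← sum_weight_mul u s v w hw, mul_apply]
  simp only [mul_diagonal, transpose_apply, of_apply]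
  rw [Fin.sum_univ_eq_sum_range (fun k => T i k * w k * T j k)]
  refine (sum_subset (range_subset_range.mpr i.isLt) fun k _ hk => ?_).trans
    (sum_congr rfl fun k _ => by ring)
  rw [eq_zero_of_lt _ _ _ (by simpa using hk)]
  ring

theorem det_hankel (hw : ∀ k, w (k + 1) * u k = w k * v k) (n : ℕ) :
    (of fun i j : Fin n => w 0 * T (i + j) 0).det
      = (∏ k ∈ range n, ∏ m ∈ range k, u m) ^ 2 * ∏ k ∈ range n, w k := by
  have hL : (of fun i k : Fin n => T i k).det = ∏ k ∈ range n, ∏ m ∈ range k, u m := by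
    rw [det_of_isLowerTriangular (of fun i k : Fin n => T i k) fun i k hik =>
      eq_zero_of_lt _ _ _ (Fin.lt_def.mp (OrderDual.toDual_lt_toDual.mp hik))]
    simpa only [of_apply, self] using Fin.prod_univ_eq_prod_range (fun k => T k k) n
  rw [hankel_eq_mul_diagonal_mul_transpose u s v w hw, det_mul, det_mul, det_transpose, hL,
    det_diagonal, Fin.prod_univ_eq_prod_range w]
  ring

end motzkinTriangle

end Motzkin

open Real Filter Topology

noncomputable def secSqTanPow (k : ℕ) (x : ℝ) : ℝ := (cos x)⁻¹ ^ (k + 2) * sin x ^ k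

theorem contDiffAt_secSqTanPow (k : ℕ) {x : ℝ} (hx : cos x ≠ 0) {n : WithTop ℕ∞} :
    ContDiffAt ℝ n (secSqTanPow k) x :=
  ((contDiff_cos.contDiffAt.inv hx).pow _).mul (contDiff_sin.contDiffAt.pow _)

-- At `k = 0` the truncated `k - 1` is harmless: its coefficient vanishes.
theorem hasDerivAt_secSqTanPow (k : ℕ) {x : ℝ} (hx : cos x ≠ 0) :
    HasDerivAt (secSqTanPow k)
      (k * secSqTanPow (k - 1) x + (k + 2) * secSqTanPow (k + 1) x) x := by
  have hsec : HasDerivAt (fun x => (cos x)⁻¹ ^ (k + 2))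
      ((k + 2 : ℕ) * ((cos x)⁻¹) ^ (k + 1) * (sin x * (cos x)⁻¹ ^ 2)) x := by
    refine (((hasDerivAt_cos x).fun_inv hx).fun_pow (k + 2)).congr_deriv ?_
    rw [show k + 2 - 1 = k + 1 from rfl, neg_neg, div_eq_mul_inv, ← inv_pow]
  refine (hsec.mul ((hasDerivAt_sin x).fun_pow k)).congr_deriv ?_
  unfold secSqTanPow
  rcases k with _ | k
  · push_cast; ring
  · have hcos : (cos x)⁻¹ * cos x = 1 := inv_mul_cancel₀ hx
    simp only [Nat.add_sub_cancel]
    push_cast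
    linear_combination ((k : ℝ) + 1) * sin x ^ k * (cos x)⁻¹ ^ (k + 2) * hcos

theorem deriv_secSqTanPow_eventuallyEq (k : ℕ) :
    deriv (secSqTanPow k) =ᶠ[𝓝 0]
      fun x => k * secSqTanPow (k - 1) x + (k + 2) * secSqTanPow (k + 1) x := by
  filter_upwards [continuous_cos.continuousAt.eventually_ne (by simp : cos 0 ≠ 0)] with x hx
  exact (hasDerivAt_secSqTanPow k hx).deriv

theorem iteratedDeriv_secSqTanPow (n k : ℕ) :
    iteratedDeriv n (secSqTanPow k) 0
      = motzkinTriangle (fun k => (k : ℝ) + 1) 0 (fun k => (k : ℝ) + 2) n k := by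
  have hcos : cos 0 ≠ 0 := by simp
  induction n generalizing k with
  | zero => rcases k with _ | k <;> simp [secSqTanPow, motzkinTriangle]
  | succ n ih =>
    rw [iteratedDeriv_succ', ((deriv_secSqTanPow_eventuallyEq k).iteratedDeriv n).eq_of_nhds,
      iteratedDeriv_fun_add (contDiffAt_const.mul (contDiffAt_secSqTanPow _ hcos))
        (contDiffAt_const.mul (contDiffAt_secSqTanPow _ hcos)),
      iteratedDeriv_const_mul_field, iteratedDeriv_const_mul_field, ih, ih]
    rcases k with _ | k
    · simp [motzkinTriangle.succ_zero]
    · rw [motzkinTriangle.succ_succ, Pi.zero_apply]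
      push_cast
      ring

theorem prod_range_add_one_pow_sub_eq_superFactorial (n : ℕ) :
    ∏ k ∈ range (n + 1), (k + 1) ^ (n - k) = n.superFactorial := by
  induction n with
  | zero => rfl
  | succ n ih =>
    have hpow : ∀ k ∈ range (n + 1), (k + 1) ^ (n + 1 - k) = (k + 1) ^ (n - k) * (k + 1) :=
      fun k hk => by rw [Nat.sub_add_comm (mem_range_succ_iff.mp hk), pow_succ]
    rw [prod_range_succ, Nat.sub_self, pow_zero, mul_one, prod_congr rfl hpow, prod_mul_distrib,
      ih, prod_range_add_one_eq_factorial, Nat.superFactorial_succ, mul_comm]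

theorem prod_range_pow_sub_eq_superFactorial_sq_mul_factorial (n : ℕ) :
    ∏ k ∈ range (n + 1), ((k + 1) * (k + 2)) ^ (n - k)
      = n.superFactorial ^ 2 * (n + 1).factorial := by
  have hshift : ∏ k ∈ range (n + 1), (k + 2) ^ (n - k) = (n + 1).superFactorial := by
    simpa [prod_range_succ' _ (n + 1)] using prod_range_add_one_pow_sub_eq_superFactorial (n + 1)
  rw [prod_congr rfl fun k _ => mul_pow .., prod_mul_distrib, hshift,
    prod_range_add_one_pow_sub_eq_superFactorial, Nat.superFactorial_succ]
  ring

theorem hankel_transform_sec_sq (n : ℕ) :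
    Matrix.det (Matrix.of fun i j : Fin (n + 1) =>
        iteratedDeriv ((i : ℕ) + (j : ℕ)) (fun x : ℝ => (Real.cos x)⁻¹ ^ 2) 0)
      = ∏ k ∈ Finset.range (n + 1), (((k + 1) * (k + 2) : ℕ) : ℝ) ^ (n - k) := by
  have hsec : (fun x : ℝ => (cos x)⁻¹ ^ 2) = secSqTanPow 0 := by
    funext x; simp [secSqTanPow]
  have hdet := motzkinTriangle.det_hankel (fun k => (k : ℝ) + 1) 0 (fun k => (k : ℝ) + 2)
    (fun k => (k : ℝ) + 1) (fun k => by push_cast; ring) (n + 1)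
  simp only [Nat.cast_zero, zero_add, one_mul] at hdet
  simp only [hsec, iteratedDeriv_secSqTanPow, hdet]
  have hfact (k : ℕ) : ∏ m ∈ range k, ((m : ℝ) + 1) = k.factorial := by
    exact_mod_cast prod_range_add_one_eq_factorial k
  have hnat := prod_range_pow_sub_eq_superFactorial_sq_mul_factorial n
  rw [← Nat.prod_range_succ_factorial] at hnat
  simp only [hfact]
  exact_mod_cast hnat.symm
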